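/- For any vector u ∈ X⊗Z and any channel Φ ∈ C(X,Y), writing σ = (Φ⊗id_Z)(uu*), the probability ⟨vv*, σ⟩ for any unit vector v ∈ Y⊗Z satisfies ⟨vv*,σ⟩ ≤ F(Tr_Y(vv*), Tr_X(uu*))², where F denotes fidelity. -/

import Mathlib

open Matrix
open scoped Kronecker ComplexOrder

noncomputable section

/-- `Φ ⊗ id` : apply a linear map `Φ` on `L(X)` to the first tensor factor of `L(X ⊗ Z)`. -/
def lmapTensorId {n m k : Type*} [Fintype n] [Fintype k]
    (Φ : Matrix n n ℂ →ₗ[ℂ] Matrix m m ℂ)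
    (M : Matrix (n × k) (n × k) ℂ) : Matrix (m × k) (m × k) ℂ :=
  fun p q => Φ (fun i j => M (i, p.2) (j, q.2)) p.1 q.1

/-- `id ⊗ Ψ` : apply a linear map `Ψ` on `L(Z)` to the second tensor factor of `L(Y ⊗ Z)`. -/
def idTensorLmap {n k l : Type*} [Fintype n] [Fintype k]
    (Ψ : Matrix k k ℂ →ₗ[ℂ] Matrix l l ℂ)
    (M : Matrix (n × k) (n × k) ℂ) : Matrix (n × l) (n × l) ℂ :=
  fun p q => Ψ (fun a b => M (p.1, a) (q.1, b)) p.2 q.2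

/-- Complete positivity: `Φ ⊗ id_k` maps positive semidefinite operators to positive
semidefinite operators for every finite-dimensional ancilla `k`. -/
def IsCompletelyPositive {n m : Type*} [Fintype n] [Fintype m]
    (Φ : Matrix n n ℂ →ₗ[ℂ] Matrix m m ℂ) : Prop :=
  ∀ (k : Type) [Fintype k] [DecidableEq k],
    ∀ M : Matrix (n × k) (n × k) ℂ, M.PosSemidef → (lmapTensorId Φ M).PosSemidef

def IsTracePreserving {n m : Type*} [Fintype n] [Fintype m]
    (Φ : Matrix n n ℂ →ₗ[ℂ] Matrix m m ℂ) : Prop :=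
  ∀ M : Matrix n n ℂ, (Φ M).trace = M.trace

/-- Partial trace over the first tensor factor. -/
def trFst {n k : Type*} [Fintype n] (M : Matrix (n × k) (n × k) ℂ) : Matrix k k ℂ :=
  fun a b => ∑ i : n, M (i, a) (i, b)

/-- Partial trace over the second tensor factor. -/
def trSnd {n k : Type*} [Fintype k] (M : Matrix (n × k) (n × k) ℂ) : Matrix n n ℂ :=
  fun i j => ∑ a : k, M (i, a) (j, a)

/-- Hilbert-Schmidt inner product `⟨A, B⟩ = Tr(A* B)`. -/
def minner {n : Type*} [Fintype n] (A B : Matrix n n ℂ) : ℂ := (Aᴴ * B).trace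

open Classical in
/-- Square root of a positive semidefinite matrix (junk value `0` otherwise). -/
def msqrt {n : Type*} [Fintype n] [DecidableEq n] (M : Matrix n n ℂ) : Matrix n n ℂ :=
  if h : M.PosSemidef then
    (h.1.eigenvectorUnitary : Matrix n n ℂ) * diagonal ((↑) ∘ (√·) ∘ h.1.eigenvalues) *
      (star h.1.eigenvectorUnitary : Matrix n n ℂ) else 0

/-- Trace norm `‖M‖₁ = Tr √(M* M)`. -/
def traceNorm {n : Type*} [Fintype n] [DecidableEq n] (M : Matrix n n ℂ) : ℝ :=
  (((Matrix.posSemidef_conjTranspose_mul_self M).1.eigenvectorUnitary : Matrix n n ℂ) *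
    diagonal (((↑) : ℝ → ℂ) ∘ (√·) ∘ (Matrix.posSemidef_conjTranspose_mul_self M).1.eigenvalues) *
    (star (Matrix.posSemidef_conjTranspose_mul_self M).1.eigenvectorUnitary : Matrix n n ℂ)).trace.re

/-- Fidelity `F(Q, R) = ‖√Q √R‖₁` of positive semidefinite matrices. -/
def fid {n : Type*} [Fintype n] [DecidableEq n] (Q R : Matrix n n ℂ) : ℝ :=
  traceNorm (msqrt Q * msqrt R)

/-- Choi-Jamiolkowski operator `J(Φ) = Σ_{i,j} Φ(|i⟩⟨j|) ⊗ |i⟩⟨j|`. -/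
def choi {n m : Type*} [Fintype n] [DecidableEq n] [Fintype m]
    (Φ : Matrix n n ℂ →ₗ[ℂ] Matrix m m ℂ) : Matrix (m × n) (m × n) ℂ :=
  fun p q => Φ (Matrix.single p.2 q.2 1) p.1 q.1

/-- Tensor product of vectors. -/
def tensorVec {α β : Type*} (v : α → ℂ) (w : β → ℂ) : α × β → ℂ := fun p => v p.1 * w p.2

/-- `u = (|00⟩ + |11⟩)/√2`. -/
def uVec : Fin 2 × Fin 2 → ℂ := fun p =>
  if p = (0, 0) then (Real.sqrt 2 : ℂ)⁻¹ else if p = (1, 1) then (Real.sqrt 2 : ℂ)⁻¹ else 0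

/-- `v = cos(π/8)|00⟩ + sin(π/8)|11⟩`. -/
def vVec : Fin 2 × Fin 2 → ℂ := fun p =>
  if p = (0, 0) then (Real.cos (Real.pi / 8) : ℂ)
  else if p = (1, 1) then (Real.sin (Real.pi / 8) : ℂ) else 0

/-- `w = -sin(π/8)|00⟩ + cos(π/8)|11⟩`. -/
def wVec : Fin 2 × Fin 2 → ℂ := fun p =>
  if p = (0, 0) then -(Real.sin (Real.pi / 8) : ℂ)
  else if p = (1, 1) then (Real.cos (Real.pi / 8) : ℂ) else 0


/-!
Polar-factor `A = √(AA*) C` and `B = √(BB*) D` with partial isometries `C`, `D`; then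
`tr(A* B) = tr(√(AA*) √(BB*) D C*)`, and `Re tr(M L) ≤ ‖M‖₁` for every contraction `L`, which is
Uhlmann's inequality `Re tr(A* B) ≤ F(AA*, BB*)`. Moving the `Y`-index of `W : Z' → Y ⊗ Z` to the
domain turns `WW*` into `Tr_Y(WW*)`, so `Re tr(W₁* W₂) ≤ F(Tr_Y(W₁W₁*), Tr_Y(W₂W₂*))`.
For `σ = GG*` take `W₂ = G` and `W₁ = v x*` with `x = G*v / ‖G*v‖`: then `W₁W₁* = vv*` and
`tr(W₁* W₂) = ‖G*v‖ = √⟨vv*, σ⟩`. Finally `σ = (Φ ⊗ id)(uu*)` is positive by complete positivity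
and `Tr_Y σ = Tr_X(uu*)` by trace preservation.
-/

open scoped MatrixOrder

namespace Matrix

section Square

variable {N : Type*} [Fintype N] [DecidableEq N]

lemma msqrt_eq_sqrt {M : Matrix N N ℂ} (hM : M.PosSemidef) : msqrt M = CFC.sqrt M := by
  rw [msqrt, dif_pos hM, CFC.sqrt_eq_cfc, cfc_nnreal_eq_real _ M hM.nonneg, hM.1.cfc_eq,
    IsHermitian.cfc, Unitary.conjStarAlgAut_apply]
  congr 4
  ext x
  simp only [Function.comp_apply, Real.coe_sqrt, Real.coe_toNNReal _ (hM.eigenvalues_nonneg x)]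

lemma posSemidef_msqrt {M : Matrix N N ℂ} (hM : M.PosSemidef) : (msqrt M).PosSemidef := by
  rw [msqrt_eq_sqrt hM]
  exact (CFC.sqrt_nonneg M).posSemidef

lemma msqrt_mul_msqrt {M : Matrix N N ℂ} (hM : M.PosSemidef) : msqrt M * msqrt M = M := by
  rw [msqrt_eq_sqrt hM]
  exact CFC.sqrt_mul_sqrt_self M hM.nonneg

lemma traceNorm_eq_re_trace_msqrt (M : Matrix N N ℂ) :
    traceNorm M = (msqrt (Mᴴ * M)).trace.re := by
  rw [msqrt, dif_pos (posSemidef_conjTranspose_mul_self M)]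
  rfl

lemma IsHermitian.exists_pseudoinverse {X : Matrix N N ℂ} (hX : X.IsHermitian) :
    ∃ Q : Matrix N N ℂ, Qᴴ = Q ∧ Commute X Q ∧ X * Q * X = X := by
  have hcont (f : ℝ → ℝ) : ContinuousOn f (spectrum ℝ X) := finite_real_spectrum.continuousOn f
  refine ⟨cfc (·⁻¹) X, IsSelfAdjoint.star_eq (cfc_predicate (·⁻¹) X),
    ((Commute.refl X).cfc_real _).symm, ?_⟩
  -- `0⁻¹ = 0` makes `x * x⁻¹ * x = x` hold on the whole spectrum, kernel included.
  calc X * cfc (·⁻¹) X * X = cfc (fun x : ℝ => x * x⁻¹ * x) X := by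
        rw [cfc_mul _ _ X (hcont _) (hcont _), cfc_mul _ _ X (hcont _) (hcont _), cfc_id' ℝ X]
    _ = X := by simp only [mul_inv_mul_cancel, cfc_id' ℝ X]

lemma PosSemidef.trace_mul_nonneg {Z K : Matrix N N ℂ} (hZ : Z.PosSemidef) (hK : K.PosSemidef) :
    0 ≤ (Z * K).trace := by
  have hR := posSemidef_msqrt hZ
  have h : (Z * K).trace = ((msqrt Z)ᴴ * K * msqrt Z).trace := by
    rw [hR.1.eq, trace_mul_cycle, msqrt_mul_msqrt hZ]
  rw [h]
  exact (hK.conjTranspose_mul_mul_same _).trace_nonneg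

end Square

section Contraction

variable {d e f : Type*} [Fintype d] [Fintype e] [Fintype f]

def IsContraction [DecidableEq e] (K : Matrix d e ℂ) : Prop := Kᴴ * K ≤ 1

lemma IsContraction.mul [DecidableEq e] [DecidableEq f] {K : Matrix d e ℂ} {L : Matrix e f ℂ}
    (hK : K.IsContraction) (hL : L.IsContraction) : (K * L).IsContraction := by
  have h : 1 - (K * L)ᴴ * (K * L) = Lᴴ * (1 - Kᴴ * K) * L + (1 - Lᴴ * L) := by
    simp only [conjTranspose_mul, Matrix.mul_sub, Matrix.sub_mul, Matrix.mul_one,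
      Matrix.mul_assoc]
    abel
  rw [IsContraction, le_iff, h]
  exact (PosSemidef.conjTranspose_mul_mul_same hK L).add hL

lemma IsContraction.re_trace_mul_le [DecidableEq d] {Z L : Matrix d d ℂ} (hZ : Z.PosSemidef)
    (hL : L.IsContraction) : (Z * L).trace.re ≤ Z.trace.re := by
  have hK : ((1 - L) + (1 - Lᴴ)).PosSemidef := by
    have h : (1 - L) + (1 - Lᴴ) = (1 - L)ᴴ * (1 - L) + (1 - Lᴴ * L) := by
      simp only [conjTranspose_sub, conjTranspose_one, sub_mul, mul_sub, one_mul, mul_one]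
      abel
    rw [h]
    exact (posSemidef_conjTranspose_mul_self _).add hL
  have htr : (Z * Lᴴ).trace = star (Z * L).trace := by
    rw [← trace_conjTranspose, conjTranspose_mul, hZ.1.eq, trace_mul_comm]
  have h := (Complex.nonneg_iff.mp (hZ.trace_mul_nonneg hK)).1
  simp only [mul_add, mul_sub, mul_one, trace_add, trace_sub, Complex.add_re, Complex.sub_re, htr,
    Complex.star_def, Complex.conj_re] at h
  linarith

lemma IsStarProjection.conjTranspose_mul_self {C : Matrix d e ℂ}
    (h : IsStarProjection (C * Cᴴ)) : IsStarProjection (Cᴴ * C) := by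
  have hcube : Cᴴ * C * (Cᴴ * C) * (Cᴴ * C) = Cᴴ * C * (Cᴴ * C) := by
    calc _ = Cᴴ * ((C * Cᴴ) * (C * Cᴴ)) * C := by simp only [Matrix.mul_assoc]
      _ = _ := by rw [h.isIdempotentElem.eq]; simp only [Matrix.mul_assoc]
  have hP : (Cᴴ * C)ᴴ = Cᴴ * C := by simp
  generalize Cᴴ * C = P at hcube hP ⊢
  have hsq : (P - P * P)ᴴ * (P - P * P) = 0 := by
    rw [conjTranspose_sub, conjTranspose_mul, hP]
    simp only [sub_mul, mul_sub, ← mul_assoc, hcube, sub_self, zero_mul]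
  refine ⟨?_, hP⟩
  rw [IsIdempotentElem, eq_comm, ← sub_eq_zero]
  exact conjTranspose_mul_self_eq_zero.mp hsq

lemma IsStarProjection.isContraction [DecidableEq e] {C : Matrix d e ℂ}
    (h : IsStarProjection (C * Cᴴ)) : C.IsContraction :=
  h.conjTranspose_mul_self.le_one

lemma IsStarProjection.isContraction_conjTranspose [DecidableEq d] {C : Matrix d e ℂ}
    (h : IsStarProjection (C * Cᴴ)) : Cᴴ.IsContraction := by
  rw [IsContraction, conjTranspose_conjTranspose]
  exact h.le_one

lemma exists_eq_mul_isStarProjection [DecidableEq d] {X : Matrix d d ℂ} (hX : X.IsHermitian)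
    {A : Matrix d e ℂ} (hA : A * Aᴴ = X * X) :
    ∃ C : Matrix d e ℂ, A = X * C ∧ IsStarProjection (C * Cᴴ) := by
  obtain ⟨Q, hQ, hXQ, hXQX⟩ := hX.exists_pseudoinverse
  have hPX : (1 - X * Q) * X = 0 := by rw [Matrix.sub_mul, Matrix.one_mul, hXQX, sub_self]
  have hPA : (1 - X * Q) * A = 0 := by
    refine self_mul_conjTranspose_eq_zero.mp ?_
    rw [conjTranspose_mul, Matrix.mul_assoc, ← Matrix.mul_assoc A, hA, ← Matrix.mul_assoc,
      ← Matrix.mul_assoc, hPX, Matrix.zero_mul, Matrix.zero_mul]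
  refine ⟨Q * A, ?_, ?_⟩
  · rw [Matrix.sub_mul, Matrix.one_mul, sub_eq_zero] at hPA
    rw [← Matrix.mul_assoc, ← hPA]
  · have h : Q * A * (Q * A)ᴴ = X * Q := by
      rw [conjTranspose_mul, hQ, Matrix.mul_assoc, ← Matrix.mul_assoc A, hA]
      simp only [← Matrix.mul_assoc]
      rw [← hXQ.eq, hXQX]
    rw [h]
    refine ⟨by rw [IsIdempotentElem, ← Matrix.mul_assoc, hXQX], ?_⟩
    rw [IsSelfAdjoint, star_eq_conjTranspose, conjTranspose_mul, hQ, hX.eq, hXQ.eq]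

end Contraction

section Fidelity

variable {N d : Type*} [Fintype N] [DecidableEq N] [Fintype d]

lemma re_trace_mul_le_traceNorm (M : Matrix N N ℂ) {L : Matrix N N ℂ} (hL : L.IsContraction) :
    (M * L).trace.re ≤ traceNorm M := by
  have hMM := posSemidef_conjTranspose_mul_self M
  set Z := msqrt (Mᴴ * M)
  have hZ : Z.PosSemidef := posSemidef_msqrt hMM
  obtain ⟨E, hME, hE⟩ := exists_eq_mul_isStarProjection hZ.1 (A := Mᴴ)
    (by rw [conjTranspose_conjTranspose, msqrt_mul_msqrt hMM])
  have hM : M = Eᴴ * Z := by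
    rw [← conjTranspose_conjTranspose M, hME, conjTranspose_mul, hZ.1.eq]
  calc (M * L).trace.re = (Z * (L * Eᴴ)).trace.re := by
        rw [hM, Matrix.mul_assoc, trace_mul_comm, Matrix.mul_assoc]
    _ ≤ Z.trace.re := (hL.mul hE.isContraction_conjTranspose).re_trace_mul_le hZ
    _ = traceNorm M := (traceNorm_eq_re_trace_msqrt M).symm

theorem re_trace_conjTranspose_mul_le_fid (A B : Matrix N d ℂ) :
    (Aᴴ * B).trace.re ≤ fid (A * Aᴴ) (B * Bᴴ) := by
  classical
  have hA := posSemidef_self_mul_conjTranspose A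
  have hB := posSemidef_self_mul_conjTranspose B
  obtain ⟨C, hAC, hC⟩ := exists_eq_mul_isStarProjection (posSemidef_msqrt hA).1
    (msqrt_mul_msqrt hA).symm
  obtain ⟨D, hBD, hD⟩ := exists_eq_mul_isStarProjection (posSemidef_msqrt hB).1
    (msqrt_mul_msqrt hB).symm
  set X := msqrt (A * Aᴴ)
  set Y := msqrt (B * Bᴴ)
  have hX : Xᴴ = X := (posSemidef_msqrt hA).1
  have hAB : Aᴴ * B = Cᴴ * (X * Y * D) := by
    rw [hAC, hBD, conjTranspose_mul, hX]
    simp only [Matrix.mul_assoc]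
  calc (Aᴴ * B).trace.re = (X * Y * (D * Cᴴ)).trace.re := by
        rw [hAB, trace_mul_comm, Matrix.mul_assoc]
    _ ≤ traceNorm (X * Y) :=
        re_trace_mul_le_traceNorm _ (hD.isContraction.mul hC.isContraction_conjTranspose)

end Fidelity

section PartialTrace

variable {m k d : Type*} [Fintype m] [Fintype k] [DecidableEq k] [Fintype d]

theorem re_trace_conjTranspose_mul_le_fid_trFst (W₁ W₂ : Matrix (m × k) d ℂ) :
    (W₁ᴴ * W₂).trace.re ≤ fid (trFst (W₁ * W₁ᴴ)) (trFst (W₂ * W₂ᴴ)) := by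
  let R : Matrix (m × k) d ℂ → Matrix k (m × d) ℂ := fun W => of fun a p => W (p.1, a) p.2
  have hR (W : Matrix (m × k) d ℂ) : R W * (R W)ᴴ = trFst (W * Wᴴ) := by
    ext a b
    simp [R, trFst, mul_apply, Fintype.sum_prod_type]
  have htr : ((R W₁)ᴴ * R W₂).trace = (W₁ᴴ * W₂).trace := by
    simp only [R, trace, diag, mul_apply, conjTranspose_apply, of_apply, Fintype.sum_prod_type]
    rw [Finset.sum_comm]
  rw [← htr, ← hR, ← hR]
  exact re_trace_conjTranspose_mul_le_fid _ _

lemma re_dotProduct_vecMul_le_fid_trFst (v : m × k → ℂ) (G : Matrix (m × k) d ℂ) {x : d → ℂ}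
    (hx : star x ⬝ᵥ x = 1) :
    (x ⬝ᵥ (star v ᵥ* G)).re ≤ fid (trFst (vecMulVec v (star v))) (trFst (G * Gᴴ)) := by
  have h := re_trace_conjTranspose_mul_le_fid_trFst (vecMulVec v (star x)) G
  rwa [conjTranspose_vecMulVec, star_star, vecMulVec_mul_vecMulVec, hx, one_smul,
    vecMulVec_mul, trace_vecMulVec] at h

lemma PosSemidef.re_dotProduct_mulVec_le_fid_sq {σ : Matrix (m × k) (m × k) ℂ}
    (hσ : σ.PosSemidef) (v : m × k → ℂ) :
    (star v ⬝ᵥ (σ *ᵥ v)).re ≤ fid (trFst (vecMulVec v (star v))) (trFst σ) ^ 2 := by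
  classical
  set G := msqrt σ
  have hσG : σ = G * Gᴴ := by rw [(posSemidef_msqrt hσ).1.eq, msqrt_mul_msqrt hσ]
  set S := (star v ⬝ᵥ (σ *ᵥ v)).re
  have hσv : (S : ℂ) = star v ⬝ᵥ (σ *ᵥ v) :=
    (Complex.eq_re_of_ofReal_le (by exact_mod_cast hσ.dotProduct_mulVec_nonneg v)).symm
  have hy : star v ᵥ* G ⬝ᵥ Gᴴ *ᵥ v = S := by
    rw [hσv, hσG, ← mulVec_mulVec, dotProduct_mulVec (star v) G]
  obtain hS | hS := (show 0 ≤ S from hσ.re_dotProduct_nonneg v).eq_or_lt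
  · rw [← hS]
    positivity
  have hsqrt : ((√S : ℝ) : ℂ) ^ 2 = S := by exact_mod_cast Real.sq_sqrt hS.le
  have hne : ((√S : ℝ) : ℂ) ≠ 0 := by exact_mod_cast (Real.sqrt_pos.2 hS).ne'
  set x := ((√S)⁻¹ : ℂ) • (Gᴴ *ᵥ v)
  have hx : star x ⬝ᵥ x = 1 := by
    simp only [x, star_smul, star_mulVec, conjTranspose_conjTranspose, smul_dotProduct,
      dotProduct_smul, hy, star_inv₀, Complex.star_def, Complex.conj_ofReal, smul_eq_mul]
    field_simp
    exact hsqrt.symm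
  have hxy : x ⬝ᵥ (star v ᵥ* G) = √S := by
    simp only [x, dotProduct_comm _ (star v ᵥ* G), dotProduct_smul, hy, smul_eq_mul]
    field_simp
    exact hsqrt.symm
  have h := re_dotProduct_vecMul_le_fid_trFst v G hx
  rw [hxy, Complex.ofReal_re, ← hσG] at h
  calc S = √S ^ 2 := (Real.sq_sqrt hS.le).symm
    _ ≤ _ := by gcongr

lemma minner_vecMulVec_star_self (v : d → ℂ) (σ : Matrix d d ℂ) :
    minner (vecMulVec v (star v)) σ = star v ⬝ᵥ (σ *ᵥ v) := by
  rw [minner, conjTranspose_vecMulVec, star_star, vecMulVec_mul, trace_vecMulVec, dotProduct_comm,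
    dotProduct_mulVec]

end PartialTrace

end Matrix

section Channel

variable {n m : Type*} [Fintype n] [Fintype m] {Φ : Matrix n n ℂ →ₗ[ℂ] Matrix m m ℂ}
  {k : Type*} [Fintype k]

lemma IsCompletelyPositive.posSemidef_lmapTensorId (hΦ : IsCompletelyPositive Φ)
    {M : Matrix (n × k) (n × k) ℂ} (hM : M.PosSemidef) : (lmapTensorId Φ M).PosSemidef := by
  let e := Fintype.equivFin k
  have h := hΦ _ (M.submatrix (Prod.map id e.symm) (Prod.map id e.symm)) (hM.submatrix _)
  convert h.submatrix (Prod.map id e) using 1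
  ext p q
  simp [lmapTensorId]

lemma IsTracePreserving.trFst_lmapTensorId (hΦ : IsTracePreserving Φ)
    (M : Matrix (n × k) (n × k) ℂ) : trFst (lmapTensorId Φ M) = trFst M := by
  ext a b
  exact hΦ (of fun i j => M (i, a) (j, b))

end Channel

theorem stmt19_general {n m k : Type*} [Fintype n] [Fintype m]
    [Fintype k] [DecidableEq k]
    (u : n × k → ℂ) (v : m × k → ℂ)
    (Φ : Matrix n n ℂ →ₗ[ℂ] Matrix m m ℂ)
    (hCP : IsCompletelyPositive Φ) (hTP : IsTracePreserving Φ) :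
    (minner (vecMulVec v (star v)) (lmapTensorId Φ (vecMulVec u (star u)))).re ≤
      fid (trFst (vecMulVec v (star v))) (trFst (vecMulVec u (star u))) ^ 2 := by
  have hσ := hCP.posSemidef_lmapTensorId (posSemidef_vecMulVec_self_star u)
  rw [minner_vecMulVec_star_self, ← hTP.trFst_lmapTensorId]
  exact hσ.re_dotProduct_mulVec_le_fid_sq v

/-- For any vector `u ∈ X ⊗ Z`, unit vector `v ∈ Y ⊗ Z`, and channel `Φ ∈ C(X, Y)`, with
`σ = (Φ ⊗ id)(uu*)`, one has `⟨vv*, σ⟩ ≤ F(Tr_Y(vv*), Tr_X(uu*))²`. -/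
theorem stmt19 {n m k : Type*} [Fintype n] [DecidableEq n] [Fintype m] [DecidableEq m]
    [Fintype k] [DecidableEq k]
    (u : n × k → ℂ) (v : m × k → ℂ) (hv : star v ⬝ᵥ v = 1)
    (Φ : Matrix n n ℂ →ₗ[ℂ] Matrix m m ℂ)
    (hCP : IsCompletelyPositive Φ) (hTP : IsTracePreserving Φ) :
    (minner (vecMulVec v (star v)) (lmapTensorId Φ (vecMulVec u (star u)))).re ≤
      fid (trFst (vecMulVec v (star v))) (trFst (vecMulVec u (star u))) ^ 2 :=
  stmt19_general u v Φ hCP hTP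

end
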